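/- Let ω₁,…,ωₙ be nonzero reals and Δ̃ := Σ_i ω_i ∂_{x_i}² the weighted Laplacian on ℝⁿ. Let q(x) = f(x_m) · Π_{i≠m} x_i^{β_i} with |β| the total degree, k ≥ 1, λ := ⌈(|β|−1)/2⌉, and let W satisfy ω_m^{λ+k} ∂_{x_m}^{2(λ+k)} W = q together with W = x^β · h(x_m) for some h. Then Q := Σ_{p=0}^{λ} (-1)^p C(k+p−1, p) ω_m^{λ−p} ∂_{x_m}^{2λ−2p} Δ̃_{\m}^p W satisfies Δ̃^k Q = q, where Δ̃_{\m} := Σ_{i≠m} ω_i ∂_{x_i}². -/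

import Mathlib

/-- Partial derivative in the `i`-th coordinate direction of a scalar field on ℝⁿ. -/
noncomputable def pd {n : ℕ} (i : Fin n) (g : EuclideanSpace ℝ (Fin n) → ℝ) :
    EuclideanSpace ℝ (Fin n) → ℝ :=
  fun x => fderiv ℝ g x (EuclideanSpace.single i 1)

open MvPolynomial Finset

section DegreeLemmas

variable {σ : Type*} {R : Type*} [CommRing R]

lemma pderiv_as_sum [DecidableEq σ] (i : σ) (p : MvPolynomial σ R) :
    pderiv i p = ∑ δ ∈ p.support, monomial (δ - Finsupp.single i 1) (coeff δ p * δ i) := by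
  conv_lhs => rw [p.as_sum]
  rw [map_sum]
  exact Finset.sum_congr rfl fun δ _ => pderiv_monomial

lemma totalDegree_pderiv_le [DecidableEq σ] (i : σ) (p : MvPolynomial σ R) :
    (pderiv i p).totalDegree ≤ p.totalDegree - 1 := by
  rw [pderiv_as_sum i p]
  refine (totalDegree_finset_sum _ _).trans (Finset.sup_le fun δ hδ => ?_)
  rcases Nat.eq_zero_or_pos (δ i) with h0 | hpos
  · simp [h0]
  · refine le_trans (totalDegree_monomial_le _ _) ?_
    simp only [Function.id_def]
    have hle : Finsupp.single i 1 ≤ δ := by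
      rw [Finsupp.single_le_iff]; exact hpos
    have hsum : ((δ - Finsupp.single i 1).sum fun _ e => e) + 1 = δ.sum fun _ e => e := by
      have hc := tsub_add_cancel_of_le hle
      calc ((δ - Finsupp.single i 1).sum fun _ e => e) + 1
          = ((δ - Finsupp.single i 1).sum fun _ e => e) +
            ((Finsupp.single i 1).sum fun _ e => e) := by
            rw [Finsupp.sum_single_index]; rfl
        _ = ((δ - Finsupp.single i 1) + Finsupp.single i 1).sum fun _ e => e := by
            rw [Finsupp.sum_add_index'] <;> simp
        _ = δ.sum fun _ e => e := by rw [hc]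
    have hδle : (δ.sum fun _ e => e) ≤ p.totalDegree := le_totalDegree hδ
    omega

lemma pderiv_eq_zero_of_totalDegree_eq_zero [DecidableEq σ] (i : σ) (p : MvPolynomial σ R)
    (h : p.totalDegree = 0) : pderiv i p = 0 := by
  rw [pderiv_as_sum i p]
  refine Finset.sum_eq_zero fun δ hδ => ?_
  rw [(totalDegree_eq_zero_iff σ p).mp h δ hδ i]
  simp

end DegreeLemmas

section KeyAlgebra

variable {M : Type*} [AddCommGroup M] [Module ℝ M]

/-- The key combinatorial-algebraic identity. -/
lemma key_identity (U L : Module.End ℝ M) (hc : Commute U L) (lam : ℕ) (w : M)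
    (hL : (L ^ (lam + 1)) w = 0) :
    ∀ k : ℕ, ((U + L) ^ k) (∑ p ∈ Finset.range (lam + 1),
        ((-1 : ℝ) ^ p * ((k + p - 1).choose p : ℝ)) • ((U ^ (lam - p)) ((L ^ p) w)))
      = (U ^ (lam + k)) w := by
  intro k
  induction k with
  | zero =>
    rw [Finset.sum_eq_single 0]
    · simp
    · intro p _ hp
      have h1 : 0 + p - 1 = p - 1 := by omega
      rw [h1, Nat.choose_eq_zero_of_lt (by omega)]
      simp
    · simp
  | succ k ih =>
    have hpow : (U + L) ^ (k + 1) = (U + L) ^ k * (U + L) := pow_succ _ _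
    rw [hpow, Module.End.mul_apply]
    have step : (U + L) (∑ p ∈ Finset.range (lam + 1),
        ((-1 : ℝ) ^ p * ((k + 1 + p - 1).choose p : ℝ)) • ((U ^ (lam - p)) ((L ^ p) w)))
        = U (∑ p ∈ Finset.range (lam + 1),
          ((-1 : ℝ) ^ p * ((k + p - 1).choose p : ℝ)) • ((U ^ (lam - p)) ((L ^ p) w))) := by
      set c : ℕ → ℕ → ℝ := fun κ p => (-1 : ℝ) ^ p * ((κ + p - 1).choose p : ℝ) with hcdef
      set T : ℕ → M := fun q => (U ^ (lam + 1 - q)) ((L ^ q) w) with hTdef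
      set G : ℕ → M := fun q => c (k + 1) (q - 1) • T q with hGdef
      have hT : ∀ p ≤ lam, U ((U ^ (lam - p)) ((L ^ p) w)) = T p := by
        intro p hple
        have he : lam + 1 - p = (lam - p) + 1 := by omega
        simp only [hTdef, he, pow_succ', Module.End.mul_apply]
      have expand : ∀ p ∈ Finset.range (lam + 1),
          (U + L) (c (k + 1) p • ((U ^ (lam - p)) ((L ^ p) w)))
          = c (k + 1) p • T p + G (p + 1) := by
        intro p hp
        have hple : p ≤ lam := Nat.lt_succ_iff.mp (Finset.mem_range.mp hp)
        have hUL : L ((U ^ (lam - p)) ((L ^ p) w)) = (U ^ (lam - p)) ((L ^ (p + 1)) w) := by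
          have hcomm : Commute (U ^ (lam - p)) L := (hc.symm.pow_right _).symm
          have h2 := LinearMap.congr_fun hcomm.eq ((L ^ p) w)
          simp only [Module.End.mul_apply] at h2
          rw [← h2, pow_succ', Module.End.mul_apply]
        have hG : G (p + 1) = c (k + 1) p • ((U ^ (lam - p)) ((L ^ (p + 1)) w)) := by
          have he : lam + 1 - (p + 1) = lam - p := by omega
          simp only [hGdef, hTdef, Nat.add_sub_cancel, he]
        rw [LinearMap.add_apply, map_smul, map_smul, hUL, hG, hT p hple]
      have hshift : (∑ p ∈ Finset.range (lam + 1), G (p + 1)) + G 0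
          = (∑ p ∈ Finset.range (lam + 1), G p) + G (lam + 1) := by
        rw [← Finset.sum_range_succ, ← Finset.sum_range_succ']
      have hGtop : G (lam + 1) = 0 := by
        simp only [hGdef, hTdef, Nat.sub_self, pow_zero, hL]
        simp
      have hG0 : G 0 = T 0 := by
        simp only [hGdef, hcdef]
        norm_num
      have combine : ∑ p ∈ Finset.range (lam + 1), (c (k + 1) p • T p + G p)
          = (∑ p ∈ Finset.range (lam + 1), c k p • T p) + T 0 := by
        have hcoef : ∀ p ∈ Finset.range (lam + 1),
            c (k + 1) p • T p + G p = c k p • T p + (if p = 0 then T 0 else 0) := by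
          intro p _
          cases p with
          | zero =>
            simp only [hGdef, hcdef, if_pos rfl]
            norm_num
          | succ r =>
            simp only [hGdef, hcdef, if_neg (by omega : ¬ r + 1 = 0)]
            rw [add_zero, ← add_smul]
            congr 1
            have e1 : k + 1 + (r + 1) - 1 = (k + r) + 1 := by omega
            have e2 : r + 1 - 1 = r := by omega
            have e3 : k + 1 + r - 1 = k + r := by omega
            have e4 : k + (r + 1) - 1 = k + r := by omega
            rw [e1, e2, e3, e4, Nat.choose_succ_succ (k + r) r]
            push_cast
            ring
        rw [Finset.sum_congr rfl hcoef, Finset.sum_add_distrib, Finset.sum_ite_eq'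
          (Finset.range (lam + 1)) 0]
        simp
      rw [map_sum, map_sum, Finset.sum_congr rfl expand, Finset.sum_add_distrib]
      have RHS : ∀ p ∈ Finset.range (lam + 1),
          U (c k p • ((U ^ (lam - p)) ((L ^ p) w))) = c k p • T p := by
        intro p hp
        have hple : p ≤ lam := Nat.lt_succ_iff.mp (Finset.mem_range.mp hp)
        rw [map_smul, hT p hple]
      rw [Finset.sum_congr rfl RHS]
      apply add_right_cancel (b := T 0)
      calc (∑ p ∈ Finset.range (lam + 1), c (k + 1) p • T p)
            + (∑ p ∈ Finset.range (lam + 1), G (p + 1)) + T 0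
          = (∑ p ∈ Finset.range (lam + 1), c (k + 1) p • T p)
            + ((∑ p ∈ Finset.range (lam + 1), G (p + 1)) + G 0) := by rw [hG0]; abel
        _ = (∑ p ∈ Finset.range (lam + 1), c (k + 1) p • T p)
            + ((∑ p ∈ Finset.range (lam + 1), G p) + G (lam + 1)) := by rw [hshift]
        _ = ∑ p ∈ Finset.range (lam + 1), (c (k + 1) p • T p + G p) := by
            rw [hGtop, add_zero, Finset.sum_add_distrib]
        _ = (∑ p ∈ Finset.range (lam + 1), c k p • T p) + T 0 := combine
    rw [step]
    have hUcomm : Commute U ((U + L) ^ k) :=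
      ((Commute.refl U).add_right hc).pow_right k
    have happ := LinearMap.congr_fun hUcomm.eq
      (∑ p ∈ Finset.range (lam + 1),
        ((-1 : ℝ) ^ p * ((k + p - 1).choose p : ℝ)) • ((U ^ (lam - p)) ((L ^ p) w)))
    simp only [Module.End.mul_apply] at happ
    rw [← happ, ih, ← Module.End.mul_apply U, ← pow_succ']
    try rw [show lam + k + 1 = lam + (k + 1) from by omega]

end KeyAlgebra



section PolyHarmSection

open scoped ContDiff

namespace PolyHarm

variable {n : ℕ}

noncomputable def mono' (m : Fin n) (δ : Fin n →₀ ℕ) : EuclideanSpace ℝ (Fin n) → ℝ :=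
  fun x => ∏ i ∈ Finset.univ.erase m, x i ^ δ i

noncomputable def bf (m : Fin n) (h : ℝ → ℝ) (δ : Fin n →₀ ℕ) :
    EuclideanSpace ℝ (Fin n) → ℝ :=
  fun x => mono' m δ x * deriv^[δ m] h (x m)

noncomputable def realize (m : Fin n) (h : ℝ → ℝ) (p : MvPolynomial (Fin n) ℝ) :
    EuclideanSpace ℝ (Fin n) → ℝ :=
  fun x => (AddMonoidAlgebra.coeff p).sum fun δ c => c * bf m h δ x

variable {m : Fin n} {h : ℝ → ℝ}

lemma realize_monomial (δ : Fin n →₀ ℕ) (c : ℝ) :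
    realize m h (monomial δ c) = fun x => c * bf m h δ x := by
  funext x
  exact MvPolynomial.sum_monomial_eq (zero_mul _)

lemma realize_add (p q : MvPolynomial (Fin n) ℝ) (x : EuclideanSpace ℝ (Fin n)) :
    realize m h (p + q) x = realize m h p x + realize m h q x := by
  unfold realize
  rw [AddMonoidAlgebra.coeff_add]
  exact Finsupp.sum_add_index' (fun δ => zero_mul _) (fun δ c₁ c₂ => add_mul _ _ _)

lemma realize_smul (a : ℝ) (p : MvPolynomial (Fin n) ℝ) (x : EuclideanSpace ℝ (Fin n)) :
    realize m h (a • p) x = a * realize m h p x := by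
  induction p using MvPolynomial.induction_on' with
  | monomial δ c =>
    rw [smul_monomial, realize_monomial, realize_monomial]
    simp [smul_eq_mul, mul_assoc]
  | add p q hp hq =>
    rw [smul_add, realize_add, realize_add, hp, hq, mul_add]

lemma realize_finset_sum {ι : Type*} (s : Finset ι) (f : ι → MvPolynomial (Fin n) ℝ)
    (x : EuclideanSpace ℝ (Fin n)) :
    realize m h (∑ i ∈ s, f i) x = ∑ i ∈ s, realize m h (f i) x := by
  induction s using Finset.cons_induction with
  | empty => simp [realize]
  | cons i s hi ih => rw [Finset.sum_cons, Finset.sum_cons, realize_add, ih]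

lemma contDiff_coord (i : Fin n) :
    ContDiff ℝ ∞ (fun x : EuclideanSpace ℝ (Fin n) => x i) :=
  (EuclideanSpace.proj (𝕜 := ℝ) i).contDiff

lemma contDiff_mono' (δ : Fin n →₀ ℕ) : ContDiff ℝ ∞ (mono' m δ) :=
  contDiff_prod fun i _ => (contDiff_coord i).pow (δ i)

lemma contDiff_bf (hh : ContDiff ℝ ∞ h) (δ : Fin n →₀ ℕ) : ContDiff ℝ ∞ (bf m h δ) :=
  (contDiff_mono' δ).mul ((hh.iterate_deriv (δ m)).comp (contDiff_coord m))

lemma contDiff_realize (hh : ContDiff ℝ ∞ h) (p : MvPolynomial (Fin n) ℝ) :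
    ContDiff ℝ ∞ (realize m h p) := by
  have : realize m h p = fun x => ∑ δ ∈ p.support, coeff δ p * bf m h δ x := by
    funext x; exact MvPolynomial.sum_def
  rw [this]
  exact ContDiff.sum fun δ _ => contDiff_const.mul (contDiff_bf hh δ)

lemma differentiable_realize (hh : ContDiff ℝ ∞ h) (p : MvPolynomial (Fin n) ℝ) :
    Differentiable ℝ (realize m h p) :=
  (contDiff_realize hh p).differentiable (by simp)

lemma hasFDerivAt_bf (hh : ContDiff ℝ ∞ h) (δ : Fin n →₀ ℕ) (x : EuclideanSpace ℝ (Fin n)) :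
    HasFDerivAt (bf m h δ)
      (mono' m δ x • ((deriv^[δ m + 1] h (x m)) •
          (EuclideanSpace.proj m : EuclideanSpace ℝ (Fin n) →L[ℝ] ℝ))
        + (deriv^[δ m] h (x m)) • (∑ j ∈ Finset.univ.erase m,
            (∏ l ∈ (Finset.univ.erase m).erase j, x l ^ δ l) •
              (((δ j : ℝ) * x j ^ (δ j - 1)) •
                (EuclideanSpace.proj j : EuclideanSpace ℝ (Fin n) →L[ℝ] ℝ)))) x := by
  have hproj : ∀ j : Fin n, HasFDerivAt (fun x : EuclideanSpace ℝ (Fin n) => x j)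
      (EuclideanSpace.proj j : EuclideanSpace ℝ (Fin n) →L[ℝ] ℝ) x :=
    fun j => (EuclideanSpace.proj (𝕜 := ℝ) j).hasFDerivAt
  have hP : HasFDerivAt (mono' m δ)
      (∑ j ∈ Finset.univ.erase m,
        (∏ l ∈ (Finset.univ.erase m).erase j, x l ^ δ l) •
          (((δ j : ℝ) * x j ^ (δ j - 1)) •
            (EuclideanSpace.proj j : EuclideanSpace ℝ (Fin n) →L[ℝ] ℝ))) x := by
    exact HasFDerivAt.finset_prod fun j _ =>
      (hasDerivAt_pow (δ j) (x j)).comp_hasFDerivAt x (hproj j)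
  have hu : HasFDerivAt (fun x : EuclideanSpace ℝ (Fin n) => deriv^[δ m] h (x m))
      ((deriv^[δ m + 1] h (x m)) •
        (EuclideanSpace.proj m : EuclideanSpace ℝ (Fin n) →L[ℝ] ℝ)) x := by
    have hd : HasDerivAt (deriv^[δ m] h) (deriv^[δ m + 1] h (x m)) (x m) := by
      rw [Function.iterate_succ_apply']
      exact ((hh.iterate_deriv (δ m)).differentiable (by
        simp)).differentiableAt.hasDerivAt
    exact hd.comp_hasFDerivAt x (hproj m)
  exact hP.mul hu

lemma pd_bf_m (hh : ContDiff ℝ ∞ h) (δ : Fin n →₀ ℕ) (x : EuclideanSpace ℝ (Fin n)) :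
    pd m (bf m h δ) x = mono' m δ x * deriv^[δ m + 1] h (x m) := by
  unfold pd
  rw [(hasFDerivAt_bf hh δ x).fderiv]
  rw [ContinuousLinearMap.add_apply, ContinuousLinearMap.smul_apply,
    ContinuousLinearMap.smul_apply, ContinuousLinearMap.smul_apply]
  rw [ContinuousLinearMap.sum_apply]
  rw [Finset.sum_eq_zero (fun j hj => ?_)]
  · simp [PiLp.proj_apply, EuclideanSpace.single_apply]
  · have hjm : j ≠ m := (Finset.mem_erase.mp hj).1
    rw [ContinuousLinearMap.smul_apply, ContinuousLinearMap.smul_apply]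
    simp [PiLp.proj_apply, EuclideanSpace.single_apply, hjm]

lemma pd_bf_ne (hh : ContDiff ℝ ∞ h) {i : Fin n} (hi : i ≠ m) (δ : Fin n →₀ ℕ)
    (x : EuclideanSpace ℝ (Fin n)) :
    pd i (bf m h δ) x = ((δ i : ℝ) * x i ^ (δ i - 1) *
      ∏ l ∈ (Finset.univ.erase m).erase i, x l ^ δ l) * deriv^[δ m] h (x m) := by
  have him : i ∈ Finset.univ.erase m := Finset.mem_erase.mpr ⟨hi, Finset.mem_univ i⟩
  unfold pd
  rw [(hasFDerivAt_bf hh δ x).fderiv]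
  rw [ContinuousLinearMap.add_apply, ContinuousLinearMap.smul_apply,
    ContinuousLinearMap.smul_apply, ContinuousLinearMap.smul_apply,
    ContinuousLinearMap.sum_apply]
  rw [Finset.sum_eq_single_of_mem i him (fun j hj hji => ?_)]
  · have hmi : ¬ (m : Fin n) = i := fun e => hi e.symm
    simp [PiLp.proj_apply, EuclideanSpace.single_apply, hmi]
    ring
  · rw [ContinuousLinearMap.smul_apply, ContinuousLinearMap.smul_apply]
    have : ¬ (j : Fin n) = i := hji
    simp [PiLp.proj_apply, EuclideanSpace.single_apply, this]

lemma pd_add' {f g : EuclideanSpace ℝ (Fin n) → ℝ} (hf : Differentiable ℝ f)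
    (hg : Differentiable ℝ g) (i : Fin n) (x : EuclideanSpace ℝ (Fin n)) :
    pd i (fun x => f x + g x) x = pd i f x + pd i g x := by
  unfold pd
  rw [fderiv_fun_add (hf x) (hg x)]
  simp

lemma pd_const_mul {g : EuclideanSpace ℝ (Fin n) → ℝ} (hg : Differentiable ℝ g) (c : ℝ)
    (i : Fin n) (x : EuclideanSpace ℝ (Fin n)) :
    pd i (fun x => c * g x) x = c * pd i g x := by
  unfold pd
  rw [fderiv_const_mul (hg x)]
  simp

lemma pd_realize_m (hh : ContDiff ℝ ∞ h) (p : MvPolynomial (Fin n) ℝ) :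
    pd m (realize m h p) = realize m h (X m * p) := by
  induction p using MvPolynomial.induction_on' with
  | monomial δ c =>
    rw [realize_monomial]
    funext x
    have hbf : Differentiable ℝ (bf m h δ) :=
      (contDiff_bf hh δ).differentiable (by simp)
    rw [pd_const_mul hbf c m x, pd_bf_m hh δ x]
    have hXm : (X m : MvPolynomial (Fin n) ℝ) * monomial δ c
        = monomial (Finsupp.single m 1 + δ) c := by
      rw [monomial_single_add, pow_one]
    rw [hXm, realize_monomial]
    unfold bf
    have h1 : (Finsupp.single m 1 + δ : Fin n →₀ ℕ) m = δ m + 1 := by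
      rw [Finsupp.add_apply, Finsupp.single_eq_same, add_comm]
    have h2 : mono' m (Finsupp.single m 1 + δ) x = mono' m δ x := by
      unfold mono'
      refine Finset.prod_congr rfl fun l hl => ?_
      have hlm : ¬ (m : Fin n) = l := fun e => (Finset.mem_erase.mp hl).1 e.symm
      simp [Finsupp.single_apply, hlm]
    simp only [h1, h2]
  | add p q hp hq =>
    have e : realize m h (p + q) = fun x => realize m h p x + realize m h q x :=
      funext (realize_add p q)
    rw [e]
    funext x
    rw [pd_add' (differentiable_realize hh p) (differentiable_realize hh q) m x,
      congrFun hp x, congrFun hq x, mul_add, realize_add]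

lemma pd_realize_ne (hh : ContDiff ℝ ∞ h) {i : Fin n} (hi : i ≠ m)
    (p : MvPolynomial (Fin n) ℝ) :
    pd i (realize m h p) = realize m h (pderiv i p) := by
  induction p using MvPolynomial.induction_on' with
  | monomial δ c =>
    rw [realize_monomial]
    funext x
    have hbf : Differentiable ℝ (bf m h δ) :=
      (contDiff_bf hh δ).differentiable (by simp)
    rw [pd_const_mul hbf c i x, pd_bf_ne hh hi δ x, pderiv_monomial, realize_monomial]
    unfold bf
    have h1 : (δ - Finsupp.single i 1 : Fin n →₀ ℕ) m = δ m := by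
      have hx : ¬ (i : Fin n) = m := hi
      rw [Finsupp.tsub_apply, Finsupp.single_apply, if_neg hx]
      omega
    have him : i ∈ Finset.univ.erase m := Finset.mem_erase.mpr ⟨hi, Finset.mem_univ i⟩
    have h2 : mono' m (δ - Finsupp.single i 1 : Fin n →₀ ℕ) x
        = x i ^ (δ i - 1) * ∏ l ∈ (Finset.univ.erase m).erase i, x l ^ δ l := by
      unfold mono'
      rw [← Finset.mul_prod_erase _ _ him]
      congr 1
      · congr 1
        simp [Finsupp.tsub_apply, Finsupp.single_apply]
      · refine Finset.prod_congr rfl fun l hl => ?_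
        have hli : ¬ (i : Fin n) = l := fun e => (Finset.mem_erase.mp hl).1 e.symm
        simp [Finsupp.tsub_apply, Finsupp.single_apply, hli]
    simp only [h1, h2]
    push_cast
    ring
  | add p q hp hq =>
    have e : realize m h (p + q) = fun x => realize m h p x + realize m h q x :=
      funext (realize_add p q)
    rw [e]
    funext x
    rw [pd_add' (differentiable_realize hh p) (differentiable_realize hh q) i x,
      congrFun hp x, congrFun hq x, map_add, realize_add]

/-! ### Operators on polynomials -/

noncomputable def MX (m : Fin n) : Module.End ℝ (MvPolynomial (Fin n) ℝ) :=
  LinearMap.mulLeft ℝ (X m)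

noncomputable def PD2 (i : Fin n) : Module.End ℝ (MvPolynomial (Fin n) ℝ) :=
  ((pderiv i : Derivation ℝ _ _) : MvPolynomial (Fin n) ℝ →ₗ[ℝ] MvPolynomial (Fin n) ℝ) *
    ((pderiv i : Derivation ℝ _ _) : MvPolynomial (Fin n) ℝ →ₗ[ℝ] MvPolynomial (Fin n) ℝ)

noncomputable def LE (m : Fin n) (vv : Fin n → ℝ) : Module.End ℝ (MvPolynomial (Fin n) ℝ) :=
  ∑ i ∈ Finset.univ.erase m, vv i • PD2 i

noncomputable def UE (m : Fin n) (vv : Fin n → ℝ) : Module.End ℝ (MvPolynomial (Fin n) ℝ) :=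
  vv m • (MX m * MX m)

lemma MX_apply (p : MvPolynomial (Fin n) ℝ) : MX m p = X m * p := rfl

lemma PD2_apply (i : Fin n) (p : MvPolynomial (Fin n) ℝ) :
    PD2 i p = pderiv i (pderiv i p) := rfl

lemma UE_apply (vv : Fin n → ℝ) (p : MvPolynomial (Fin n) ℝ) :
    UE m vv p = vv m • (X m * (X m * p)) := rfl

lemma LE_apply (vv : Fin n → ℝ) (p : MvPolynomial (Fin n) ℝ) :
    LE m vv p = ∑ i ∈ Finset.univ.erase m, vv i • pderiv i (pderiv i p) := by
  unfold LE
  rw [LinearMap.sum_apply]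
  rfl

lemma commute_UE_LE (vv : Fin n → ℝ) : Commute (UE m vv) (LE m vv) := by
  refine Commute.sum_right _ _ _ fun i hi => ?_
  have him : i ≠ m := (Finset.mem_erase.mp hi).1
  have hc0 : Commute (MX m)
      ((pderiv i : Derivation ℝ _ _) : MvPolynomial (Fin n) ℝ →ₗ[ℝ] MvPolynomial (Fin n) ℝ) := by
    apply LinearMap.ext
    intro p
    show X m * pderiv i p = pderiv i (X m * p)
    rw [pderiv_mul, pderiv_X_of_ne (fun e => him e.symm)]
    simp
  have hc1 : Commute (MX m * MX m) (PD2 i) :=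
    ((hc0.mul_right hc0).mul_left (hc0.mul_right hc0))
  exact (hc1.smul_left (vv m)).smul_right (vv i)

lemma LE_pow_zero (vv : Fin n → ℝ) : ∀ (s : ℕ) (p : MvPolynomial (Fin n) ℝ),
    p.totalDegree < 2 * s → ((LE m vv) ^ s) p = 0 := by
  intro s
  induction s with
  | zero => intro p hp; omega
  | succ s ih =>
    intro p hp
    rw [pow_succ, Module.End.mul_apply]
    rcases le_or_gt p.totalDegree 1 with hle | hgt
    · have hLp : LE m vv p = 0 := by
        rw [LE_apply]
        refine Finset.sum_eq_zero fun i _ => ?_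
        have hd : (pderiv i p).totalDegree = 0 := by
          have := totalDegree_pderiv_le i p
          omega
        rw [pderiv_eq_zero_of_totalDegree_eq_zero i _ hd, smul_zero]
      rw [hLp, map_zero]
    · refine ih _ ?_
      have hgoal : (LE m vv p).totalDegree ≤ p.totalDegree - 2 := by
        rw [LE_apply]
        refine (totalDegree_finset_sum _ _).trans (Finset.sup_le fun i _ => ?_)
        refine (totalDegree_smul_le _ _).trans ?_
        have h1 := totalDegree_pderiv_le i (pderiv i p)
        have h2 := totalDegree_pderiv_le i p
        omega
      omega

lemma UE_pow (vv : Fin n → ℝ) : ∀ (j : ℕ) (v : MvPolynomial (Fin n) ℝ),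
    ((UE m vv) ^ j) v = vv m ^ j • (((MX m) ^ (2 * j)) v) := by
  intro j
  induction j with
  | zero => intro v; simp
  | succ j ih =>
    intro v
    rw [pow_succ', Module.End.mul_apply, ih, UE_apply, ← MX_apply, ← MX_apply]
    rw [map_smul, map_smul, smul_smul]
    have e2 : 2 * (j + 1) = (2 * j) + 1 + 1 := by omega
    rw [e2, pow_succ' (MX m) (2 * j + 1), Module.End.mul_apply,
      pow_succ' (MX m) (2 * j), Module.End.mul_apply, ← pow_succ' (vv m) j]

lemma pdm_iter (hh : ContDiff ℝ ∞ h) : ∀ (r : ℕ) (p : MvPolynomial (Fin n) ℝ),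
    (pd m)^[r] (realize m h p) = realize m h (((MX m) ^ r) p) := by
  intro r
  induction r with
  | zero => intro p; simp
  | succ r ih =>
    intro p
    rw [Function.iterate_succ_apply', ih, pd_realize_m hh]
    rw [pow_succ', Module.End.mul_apply, MX_apply]

end PolyHarm

end PolyHarmSection


/-- Corollary 5.1 (generalized polyharmonic / wave equation): let
`Δ̃ = ∑ i ω_i ∂_{x_i}²` with nonzero weights, `q(x) = f(x_m) ∏_{i≠m} x_i^{β_i}`,
`λ = ⌈(|β|−1)/2⌉` (here `|β| / 2` in ℕ), and let the smooth `W` have the product form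
`W = (∏_{i≠m} x_i^{β_i}) · h(x_m)` and satisfy `ω_m^{λ+k} ∂_{x_m}^{2(λ+k)} W = q`.
Then `Q := ∑_{p=0}^{λ} (-1)^p C(k+p−1,p) ω_m^{λ−p} ∂_{x_m}^{2λ−2p} Δ̃_{∖m}^p W`
satisfies `Δ̃^k Q = q`. -/
theorem generalized_polyharmonic_integration_annihilator (n : ℕ) (m : Fin n)
    (ω : Fin n → ℝ) (hω : ∀ i, ω i ≠ 0) (k : ℕ) (hk : 1 ≤ k)
    (f h : ℝ → ℝ) (hf : Continuous f) (β : Fin n → ℕ)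
    (q W : EuclideanSpace ℝ (Fin n) → ℝ)
    (hq : ∀ x, q x = f (x m) * ∏ i ∈ Finset.univ.erase m, x i ^ β i)
    (hWform : ∀ x, W x = (∏ i ∈ Finset.univ.erase m, x i ^ β i) * h (x m))
    (hW : ContDiff ℝ (⊤ : ℕ∞) W)
    (hint : ∀ x, ω m ^ ((∑ i ∈ Finset.univ.erase m, β i) / 2 + k) *
      ((pd m)^[2 * ((∑ i ∈ Finset.univ.erase m, β i) / 2 + k)] W) x = q x) :
    let lam : ℕ := (∑ i ∈ Finset.univ.erase m, β i) / 2
    let Lm : (EuclideanSpace ℝ (Fin n) → ℝ) → EuclideanSpace ℝ (Fin n) → ℝ :=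
      fun g x => ∑ i ∈ Finset.univ.erase m, ω i * pd i (pd i g) x
    let Dtil : (EuclideanSpace ℝ (Fin n) → ℝ) → EuclideanSpace ℝ (Fin n) → ℝ :=
      fun g x => ∑ i, ω i * pd i (pd i g) x
    let Q : EuclideanSpace ℝ (Fin n) → ℝ := fun x =>
      ∑ p ∈ Finset.range (lam + 1),
        (-1 : ℝ) ^ p * ((k + p - 1).choose p : ℝ) * ω m ^ (lam - p) *
          ((pd m)^[2 * lam - 2 * p] (Lm^[p] W)) x
    ∀ x, (Dtil^[k] Q) x = q x := by
  intro lam Lm Dtil Q x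
  classical
  open PolyHarm MvPolynomial Finset in
  skip
  -- `h` is smooth
  have hh : ContDiff ℝ ((⊤ : ℕ∞) : WithTop ℕ∞) h := by
    set e : ℝ → EuclideanSpace ℝ (Fin n) :=
      fun t => (EuclideanSpace.equiv (Fin n) ℝ).symm (fun i => if i = m then t else 1)
      with hedef
    have he : ContDiff ℝ ((⊤ : ℕ∞) : WithTop ℕ∞) e := by
      refine ((EuclideanSpace.equiv (Fin n) ℝ).symm.contDiff).comp ?_
      refine contDiff_pi.mpr fun i => ?_
      by_cases him : i = m
      · convert (contDiff_id : ContDiff ℝ _ (id : ℝ → ℝ)) using 1; funext t; simp [him]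
      · simpa [him] using contDiff_const
    have heval : ∀ (t : ℝ) (i : Fin n), e t i = if i = m then t else 1 := fun t i => rfl
    have heq : h = fun t : ℝ => W (e t) := by
      funext t
      rw [hWform]
      rw [heval t m, if_pos rfl,
        Finset.prod_eq_one (fun i hi => by rw [heval t i, if_neg (Finset.mem_erase.mp hi).1,
          one_pow]), one_mul]
    rw [heq]
    exact (hW.of_le (by simp)).comp he
  set β' : Fin n →₀ ℕ := Finsupp.equivFunOnFinite.symm (fun i => if i = m then 0 else β i)
    with hβ'
  have hβ'apply : ∀ i, β' i = if i = m then 0 else β i := fun i => rfl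
  set w0 : MvPolynomial (Fin n) ℝ := MvPolynomial.monomial β' 1 with hw0
  -- `W` is the realization of `w0`
  have hWr : W = realize m h w0 := by
    funext y
    rw [hWform, hw0, realize_monomial]
    simp only [one_mul]
    show _ = mono' m β' y * deriv^[β' m] h (y m)
    rw [hβ'apply m, if_pos rfl]
    show _ = mono' m β' y * h (y m)
    congr 1
    refine Finset.prod_congr rfl fun i hi => ?_
    rw [hβ'apply i, if_neg (Finset.mem_erase.mp hi).1]
  -- correspondence for the operators
  have hLm1 : ∀ p, Lm (realize m h p) = realize m h (LE m ω p) := by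
    intro p
    funext y
    show ∑ i ∈ Finset.univ.erase m, ω i * pd i (pd i (realize m h p)) y = _
    rw [LE_apply, realize_finset_sum]
    refine Finset.sum_congr rfl fun i hi => ?_
    have him : i ≠ m := (Finset.mem_erase.mp hi).1
    rw [pd_realize_ne hh him, pd_realize_ne hh him, realize_smul]
  have hDt1 : ∀ p, Dtil (realize m h p) = realize m h ((UE m ω + LE m ω) p) := by
    intro p
    funext y
    show ∑ i, ω i * pd i (pd i (realize m h p)) y = _
    rw [LinearMap.add_apply, realize_add, ← Finset.add_sum_erase _ _ (Finset.mem_univ m)]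
    congr 1
    · rw [pd_realize_m hh, pd_realize_m hh, UE_apply, realize_smul]
    · exact congrFun (hLm1 p) y
  have hLmI : ∀ (r : ℕ) p, Lm^[r] (realize m h p) = realize m h (((LE m ω) ^ r) p) := by
    intro r
    induction r with
    | zero => intro p; simp
    | succ r ih =>
      intro p
      rw [Function.iterate_succ_apply', ih, hLm1, pow_succ' (LE m ω) r, Module.End.mul_apply]
  have hDtI : ∀ (r : ℕ) p, Dtil^[r] (realize m h p)
      = realize m h (((UE m ω + LE m ω) ^ r) p) := by
    intro r
    induction r with
    | zero => intro p; simp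
    | succ r ih =>
      intro p
      rw [Function.iterate_succ_apply', ih, hDt1,
        pow_succ' (UE m ω + LE m ω) r, Module.End.mul_apply]
  -- the polynomial representing Q
  have hQr : Q = realize m h (∑ p ∈ Finset.range (lam + 1),
      ((-1 : ℝ) ^ p * ((k + p - 1).choose p : ℝ)) •
        (((UE m ω) ^ (lam - p)) (((LE m ω) ^ p) w0))) := by
    funext y
    show (∑ p ∈ Finset.range (lam + 1),
        (-1 : ℝ) ^ p * ((k + p - 1).choose p : ℝ) * ω m ^ (lam - p) *
          ((pd m)^[2 * lam - 2 * p] (Lm^[p] W)) y) = _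
    rw [realize_finset_sum]
    refine Finset.sum_congr rfl fun p hp => ?_
    have hple : p ≤ lam := Nat.lt_succ_iff.mp (Finset.mem_range.mp hp)
    rw [hWr, hLmI p w0, show 2 * lam - 2 * p = 2 * (lam - p) from by omega,
      pdm_iter hh (2 * (lam - p)), realize_smul, UE_pow ω (lam - p), realize_smul]
    ring
  -- degree bound gives annihilation
  have hdeg : w0.totalDegree = ∑ i ∈ Finset.univ.erase m, β i := by
    rw [hw0, MvPolynomial.totalDegree_monomial _ (one_ne_zero)]
    rw [Finsupp.sum_fintype _ _ (fun i => rfl)]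
    rw [← Finset.add_sum_erase _ _ (Finset.mem_univ m), hβ'apply m, if_pos rfl, zero_add]
    exact Finset.sum_congr rfl fun i hi => by
      rw [hβ'apply i, if_neg (Finset.mem_erase.mp hi).1]
  have hlam : lam = (∑ i ∈ Finset.univ.erase m, β i) / 2 := rfl
  have hL0 : ((LE m ω) ^ (lam + 1)) w0 = 0 := by
    refine LE_pow_zero ω (lam + 1) w0 ?_
    rw [hdeg]
    omega
  -- assemble
  rw [hQr, hDtI k, key_identity (UE m ω) (LE m ω) (commute_UE_LE ω) lam w0 hL0 k,
    UE_pow ω (lam + k), realize_smul, ← pdm_iter hh (2 * (lam + k)), ← hWr]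
  exact hint x
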